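/- arXiv:math/0402247 — 3 statements merged into one kernel-verified Lean document; each statement's English description precedes it below -/
import Mathlib

section
/- For m ≥ 0 and even d ≥ 4, with n = m+d+1, the total vertex count ∑_{k=0}^{d/2} C(k+m, m) + ∑_{k=0}^{(d-2)/2} C(k+m, m) equals C(n - d/2, d/2) + C(n - 1 - d/2, d/2 - 1). -/
/-! Both sums are hockey-stick sums: `∑_{k ≤ r} C(k+m, m) = C(m+r+1, r)`. With `d = 2e` and
`n = m + 2e + 1` they evaluate to `C(m+e+1, e) = C(n - e, e)` and `C(m+e, e-1) = C(n-1-e, e-1)`. -/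

open Finset

theorem Nat.sum_range_add_choose_eq_choose_left (r m : ℕ) :
    ∑ k ∈ range (r + 1), (k + m).choose m = (r + m + 1).choose r := by
  rw [Nat.sum_range_add_choose]
  exact Nat.choose_symm_of_eq_add (by omega)

theorem stmt_3_general (m d n : ℕ) (hd : Even d) (hn : n = m + d + 1) :
    (∑ k ∈ Finset.range (d / 2 + 1), (k + m).choose m) +
      (∑ k ∈ Finset.range ((d - 2) / 2 + 1), (k + m).choose m) =
      (n - d / 2).choose (d / 2) + (n - 1 - d / 2).choose (d / 2 - 1) := by
  obtain ⟨e, rfl⟩ := hd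
  subst hn
  cases e with
  | zero => simp
  | succ e =>
    have half : (e + 1 + (e + 1)) / 2 = e + 1 := by omega
    have half_pred : (e + 1 + (e + 1) - 2) / 2 = e := by omega
    rw [half, half_pred, Nat.sum_range_add_choose_eq_choose_left,
      Nat.sum_range_add_choose_eq_choose_left]
    congr 2 <;> omega

/-- For `m ≥ 0` and even `d ≥ 4`, with `n = m + d + 1`, the total vertex count
`∑_{k=0}^{d/2} C(k+m, m) + ∑_{k=0}^{(d-2)/2} C(k+m, m)` equals
`C(n - d/2, d/2) + C(n - 1 - d/2, d/2 - 1)`. -/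
theorem stmt_3 (m d n : ℕ) (hd : Even d) (hd4 : 4 ≤ d) (hn : n = m + d + 1) :
    (∑ k ∈ Finset.range (d / 2 + 1), (k + m).choose m) +
      (∑ k ∈ Finset.range ((d - 2) / 2 + 1), (k + m).choose m) =
      (n - d / 2).choose (d / 2) + (n - 1 - d / 2).choose (d / 2 - 1) :=
  stmt_3_general m d n hd hn
end

section
/- Let n ≥ 5. Define a Type 1 set as {j₁, j₁+2} ∪ {j₂, j₂+1} with 1 ≤ j₁ < n-3, j₁+3 ≤ j₂, j₂ < n. Then the number of Type 1 sets is C(n-3, 2). -/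
/-!
A Type 1 set determines its parameters: `j₁` is its least element and `j₂ + 1` its largest.
So Type 1 sets correspond to the pairs `(j₁, j₂)`, and `(j₁, j₂) ↦ (j₁ - 1, j₂ - 3)` identifies
those pairs with the strictly increasing pairs in `{0, …, n - 4}`, of which there are `C(n - 3, 2)`.
-/

open Finset

def type1Set (p : ℕ × ℕ) : Finset ℕ := {p.1, p.1 + 2, p.2, p.2 + 1}

lemma type1Set_injOn : Set.InjOn type1Set {p | p.1 < p.2} := by
  rintro ⟨a, b⟩ hab ⟨c, d⟩ hcd h
  simp only [Set.mem_ofPred_eq] at hab hcd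
  have ha : a ∈ type1Set (c, d) := h ▸ by simp [type1Set]
  have hc : c ∈ type1Set (a, b) := h.symm ▸ by simp [type1Set]
  have hb : b + 1 ∈ type1Set (c, d) := h ▸ by simp [type1Set]
  have hd : d + 1 ∈ type1Set (a, b) := h.symm ▸ by simp [type1Set]
  simp only [type1Set, mem_insert, mem_singleton] at ha hc hb hd
  ext <;> simp only <;> omega

lemma ncard_type1Params (n : ℕ) :
    {p : ℕ × ℕ | 1 ≤ p.1 ∧ p.1 + 3 ≤ p.2 ∧ p.2 < n}.ncard = (n - 3).choose 2 := by
  have hshift : {p : ℕ × ℕ | 1 ≤ p.1 ∧ p.1 + 3 ≤ p.2 ∧ p.2 < n} =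
      (fun x : ℕ × ℕ => (x.1 + 1, x.2 + 3)) ''
        ↑{x ∈ range (n - 3) ×ˢ range (n - 3) | x.1 < x.2} := by
    ext ⟨a, b⟩
    simp only [Set.mem_ofPred_eq, Set.mem_image, coe_filter, mem_product, mem_range,
      Prod.exists, Prod.mk.injEq]
    constructor
    · rintro ⟨h1, h2, h3⟩
      exact ⟨a - 1, b - 3, by omega, by omega, by omega⟩
    · rintro ⟨x, y, h, rfl, rfl⟩
      omega
  have hinj : Function.Injective fun x : ℕ × ℕ => (x.1 + 1, x.2 + 3) := by
    rintro ⟨x, y⟩ ⟨x', y'⟩ h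
    simp only [Prod.mk.injEq, Nat.add_right_cancel_iff] at h
    rw [h.1, h.2]
  rw [hshift, Set.ncard_image_of_injective _ hinj, Set.ncard_coe_finset,
    card_product_filter_lt, card_range]

theorem stmt_4_general (n : ℕ) :
    {s : Finset ℕ | ∃ j₁ j₂ : ℕ, 1 ≤ j₁ ∧ j₁ < n - 3 ∧ j₁ + 3 ≤ j₂ ∧ j₂ < n ∧
      s = {j₁, j₁ + 2, j₂, j₂ + 1}}.ncard = (n - 3).choose 2 := by
  have hfamily : {s : Finset ℕ | ∃ j₁ j₂ : ℕ, 1 ≤ j₁ ∧ j₁ < n - 3 ∧ j₁ + 3 ≤ j₂ ∧ j₂ < n ∧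
      s = {j₁, j₁ + 2, j₂, j₂ + 1}} =
      type1Set '' {p : ℕ × ℕ | 1 ≤ p.1 ∧ p.1 + 3 ≤ p.2 ∧ p.2 < n} := by
    ext s
    simp only [Set.mem_ofPred_eq, Set.mem_image, Prod.exists, type1Set]
    constructor
    · rintro ⟨a, b, h1, -, h3, h4, rfl⟩
      exact ⟨a, b, ⟨h1, h3, h4⟩, rfl⟩
    · rintro ⟨a, b, ⟨h1, h3, h4⟩, rfl⟩
      exact ⟨a, b, h1, by omega, h3, h4, rfl⟩
  have hinj : Set.InjOn type1Set {p : ℕ × ℕ | 1 ≤ p.1 ∧ p.1 + 3 ≤ p.2 ∧ p.2 < n} :=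
    type1Set_injOn.mono fun p hp => by simp only [Set.mem_ofPred_eq] at hp ⊢; omega
  rw [hfamily, hinj.ncard_image, ncard_type1Params]

/-- For `n ≥ 5`, the number of Type 1 sets `{j₁, j₁+2} ∪ {j₂, j₂+1}` with
`1 ≤ j₁ < n-3`, `j₁+3 ≤ j₂`, `j₂ < n` is `C(n-3, 2)`. -/
theorem stmt_4 (n : ℕ) (hn : 5 ≤ n) :
    {s : Finset ℕ | ∃ j₁ j₂ : ℕ, 1 ≤ j₁ ∧ j₁ < n - 3 ∧ j₁ + 3 ≤ j₂ ∧ j₂ < n ∧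
      s = {j₁, j₁ + 2, j₂, j₂ + 1}}.ncard = (n - 3).choose 2 :=
  stmt_4_general n
end

section
/- Let P ⊂ ℝ^d be a d-dimensional polytope and let A, B be a partition of its vertex set into two nonempty disjoint sets. If there exists an affine hyperplane H in general position with respect to P (i.e., containing no vertex of P) with A ⊂ H⁺ and B ⊂ H⁻, then P ∩ H^{≥0} is a d-dimensional polytope whose vertex set consists of A together with the points conv{v,w} ∩ H for each edge conv{v,w} of P with v ∈ A, w ∈ B. -/
open scoped RealInnerProductSpace

section Aux

variable {V : Type*} [NormedAddCommGroup V] [InnerProductSpace ℝ V]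

lemma inner_combo (u y z : V) (a b : ℝ) :
    ⟪u, a • y + b • z⟫ = a * ⟪u, y⟫ + b * ⟪u, z⟫ := by
  simp [inner_add_right, real_inner_smul_right]

lemma seg_unique {u v w p q : V} {c : ℝ} (hp : p ∈ segment ℝ v w) (hq : q ∈ segment ℝ v w)
    (hpc : ⟪u, p⟫ = c) (hqc : ⟪u, q⟫ = c) (hne : ⟪u, v⟫ ≠ ⟪u, w⟫) : p = q := by
  obtain ⟨a, b, ha, hb, hab, rfl⟩ := hp
  obtain ⟨a', b', ha', hb', hab', rfl⟩ := hq
  rw [inner_combo] at hpc hqc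
  have hΔ : ⟪u, v⟫ - ⟪u, w⟫ ≠ 0 := sub_ne_zero.2 hne
  have h1 : a * (⟪u, v⟫ - ⟪u, w⟫) = a' * (⟪u, v⟫ - ⟪u, w⟫) := by
    linear_combination hpc - hqc + (hab' - hab) * ⟪u, w⟫
  have h2 : a = a' := mul_right_cancel₀ hΔ h1
  have h3 : b = b' := by linarith
  rw [h2, h3]

/-- An extreme point of a superset that lies in the subset is an extreme point of the subset. -/
lemma extreme_mono {P Q : Set V} (hQP : Q ⊆ P) {x : V} (hx : x ∈ Set.extremePoints ℝ P)
    (hxQ : x ∈ Q) : x ∈ Set.extremePoints ℝ Q := by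
  rw [mem_extremePoints] at hx ⊢
  exact ⟨hxQ, fun x₁ h₁ x₂ h₂ h => hx.2 x₁ (hQP h₁) x₂ (hQP h₂) h⟩

/-- Shrinking: an extreme point of `P ∩ {c ≤ ⟪u,·⟫}` with `c < ⟪u,x⟫` is extreme in `P`. -/
lemma aux_extreme_gt {P : Set V} (hPconv : Convex ℝ P) {u : V} {c : ℝ} {x : V}
    (hx : x ∈ Set.extremePoints ℝ (P ∩ {z | c ≤ ⟪u, z⟫})) (hxc : c < ⟪u, x⟫) :
    x ∈ Set.extremePoints ℝ P := by
  rw [mem_extremePoints] at hx ⊢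
  obtain ⟨⟨hxP, -⟩, hxe⟩ := hx
  refine ⟨hxP, fun x₁ h₁ x₂ h₂ h => ?_⟩
  obtain ⟨a, b, ha, hb, hab, hx'⟩ := h
  have hb' : b = 1 - a := by linarith
  subst hb'
  set M : ℝ := |⟪u, x₁⟫ - ⟪u, x⟫| + |⟪u, x₂⟫ - ⟪u, x⟫| + 1 with hM
  have hM0 : 0 < M := by positivity
  set t : ℝ := min 1 ((⟪u, x⟫ - c) / M) with ht
  have ht0 : 0 < t := lt_min one_pos (div_pos (by linarith) hM0)
  have ht1 : t ≤ 1 := min_le_left _ _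
  have htM : t * M ≤ ⟪u, x⟫ - c := by
    have h5 := min_le_right 1 ((⟪u, x⟫ - c) / M)
    calc t * M ≤ ((⟪u, x⟫ - c) / M) * M := by nlinarith
    _ = ⟪u, x⟫ - c := by field_simp
  have habs1 : |⟪u, x₁⟫ - ⟪u, x⟫| ≤ M := by
    rw [hM]; linarith [abs_nonneg (⟪u, x₂⟫ - ⟪u, x⟫)]
  have habs2 : |⟪u, x₂⟫ - ⟪u, x⟫| ≤ M := by
    rw [hM]; linarith [abs_nonneg (⟪u, x₁⟫ - ⟪u, x⟫)]
  set y₁ : V := x + t • (x₁ - x) with hy₁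
  set y₂ : V := x + t • (x₂ - x) with hy₂
  have hy₁P : y₁ ∈ P := by
    have h6 : y₁ = (1 - t) • x + t • x₁ := by rw [hy₁]; module
    rw [h6]; exact hPconv hxP h₁ (by linarith) ht0.le (by ring)
  have hy₂P : y₂ ∈ P := by
    have h6 : y₂ = (1 - t) • x + t • x₂ := by rw [hy₂]; module
    rw [h6]; exact hPconv hxP h₂ (by linarith) ht0.le (by ring)
  have hiy₁ : ⟪u, y₁⟫ = ⟪u, x⟫ + t * (⟪u, x₁⟫ - ⟪u, x⟫) := by
    rw [hy₁]; simp [inner_add_right, real_inner_smul_right, inner_sub_right]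
  have hiy₂ : ⟪u, y₂⟫ = ⟪u, x⟫ + t * (⟪u, x₂⟫ - ⟪u, x⟫) := by
    rw [hy₂]; simp [inner_add_right, real_inner_smul_right, inner_sub_right]
  have hcy₁ : c ≤ ⟪u, y₁⟫ := by
    rw [hiy₁]
    nlinarith [neg_abs_le (⟪u, x₁⟫ - ⟪u, x⟫), mul_le_mul_of_nonneg_left habs1 ht0.le]
  have hcy₂ : c ≤ ⟪u, y₂⟫ := by
    rw [hiy₂]
    nlinarith [neg_abs_le (⟪u, x₂⟫ - ⟪u, x⟫), mul_le_mul_of_nonneg_left habs2 ht0.le]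
  have key : a • y₁ + (1 - a) • y₂ = x := by
    rw [hy₁, hy₂, ← hx']; module
  obtain ⟨e₁, e₂⟩ := hxe y₁ ⟨hy₁P, hcy₁⟩ y₂ ⟨hy₂P, hcy₂⟩ ⟨a, 1 - a, ha, hb, by ring, key⟩
  have ht0' : t ≠ 0 := ne_of_gt ht0
  constructor
  · have h7 : x + t • (x₁ - x) = x := by rw [← hy₁]; exact e₁
    have h8 : t • (x₁ - x) = 0 := by
      have := add_eq_left.mp h7; exact this
    rcases smul_eq_zero.mp h8 with h | h
    · exact absurd h ht0'
    · exact sub_eq_zero.mp h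
  · have h7 : x + t • (x₂ - x) = x := by rw [← hy₂]; exact e₂
    have h8 : t • (x₂ - x) = 0 := add_eq_left.mp h7
    rcases smul_eq_zero.mp h8 with h | h
    · exact absurd h ht0'
    · exact sub_eq_zero.mp h



lemma aux_perturb {P : Set V} {u : V} {c : ℝ} {x y : V} {ε : ℝ}
    (hx : x ∈ Set.extremePoints ℝ (P ∩ {z | c ≤ ⟪u, z⟫})) (hxc : ⟪u, x⟫ = c)
    (hy : ⟪u, y⟫ = 0) (hε : 0 < ε) (h₁ : x + ε • y ∈ P) (h₂ : x - ε • y ∈ P) : y = 0 := by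
  rw [mem_extremePoints] at hx
  have m₁ : x + ε • y ∈ P ∩ {z | c ≤ ⟪u, z⟫} := by
    refine ⟨h₁, ?_⟩
    simp only [Set.mem_setOf_eq, inner_add_right, real_inner_smul_right, hy, hxc]
    linarith
  have m₂ : x - ε • y ∈ P ∩ {z | c ≤ ⟪u, z⟫} := by
    refine ⟨h₂, ?_⟩
    simp only [Set.mem_setOf_eq, inner_sub_right, real_inner_smul_right, hy, hxc]
    linarith
  have hseg : x ∈ openSegment ℝ (x + ε • y) (x - ε • y) := by
    refine ⟨1/2, 1/2, by norm_num, by norm_num, by norm_num, ?_⟩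
    module
  obtain ⟨e₁, -⟩ := hx.2 _ m₁ _ m₂ hseg
  have h8 : ε • y = 0 := add_eq_left.mp e₁
  rcases smul_eq_zero.mp h8 with h | h
  · exact absurd h (ne_of_gt hε)
  · exact h

lemma aux_interval {P : Set V} (hPconv : Convex ℝ P) {x z : V} {δ δ' : ℝ}
    (hδ : 0 < δ) (hδ' : 0 < δ') (h₁ : x + δ • z ∈ P) (h₂ : x - δ' • z ∈ P) :
    ∀ t : ℝ, |t| ≤ min δ δ' → x + t • z ∈ P := by
  intro t ht
  have hxP : x ∈ P := by
    have h3 : x = (δ' / (δ + δ')) • (x + δ • z) + (δ / (δ + δ')) • (x - δ' • z) := by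
      match_scalars <;> field_simp <;> ring
    rw [h3]
    exact hPconv h₁ h₂ (by positivity) (by positivity) (by field_simp; ring)
  rcases le_total 0 t with h0 | h0
  · have htδ : t ≤ δ := le_trans (le_trans (le_abs_self t) ht) (min_le_left _ _)
    have h3 : x + t • z = (1 - t / δ) • x + (t / δ) • (x + δ • z) := by
      match_scalars <;> field_simp <;> ring
    rw [h3]
    refine hPconv hxP h₁ ?_ (by positivity) (by ring)
    · rw [sub_nonneg]; exact div_le_one_of_le₀ htδ hδ.le
  · have htδ : -t ≤ δ' := by
      have := le_trans (le_trans (neg_le_abs t) ht) (min_le_right _ _); linarith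
    have h3 : x + t • z = (1 + t / δ') • x + (-t / δ') • (x - δ' • z) := by
      match_scalars <;> field_simp <;> ring
    rw [h3]
    have h4 : 0 ≤ -t / δ' := div_nonneg (by linarith) hδ'.le
    have h5 : -t / δ' ≤ 1 := div_le_one_of_le₀ htδ hδ'.le
    rw [neg_div] at h4 h5
    exact hPconv hxP h₂ (by linarith) (by rw [neg_div]; linarith) (by ring)

lemma aux_two_dir {P : Set V} (hPconv : Convex ℝ P) {x z₁ z₂ : V} {e₁ e₂ : ℝ}
    (he₁ : 0 < e₁) (he₂ : 0 < e₂)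
    (hz₁ : ∀ t : ℝ, |t| ≤ e₁ → x + t • z₁ ∈ P) (hz₂ : ∀ t : ℝ, |t| ≤ e₂ → x + t • z₂ ∈ P)
    (α β : ℝ) : ∃ ε : ℝ, 0 < ε ∧ x + ε • (α • z₁ + β • z₂) ∈ P ∧
      x - ε • (α • z₁ + β • z₂) ∈ P := by
  set ε : ℝ := min (e₁ / (2 * (|α| + 1))) (e₂ / (2 * (|β| + 1))) with hεdef
  have hε : 0 < ε := lt_min (by positivity) (by positivity)
  have hb₁ : |2 * ε * α| ≤ e₁ := by
    have h5 : ε ≤ e₁ / (2 * (|α| + 1)) := min_le_left _ _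
    rw [le_div_iff₀ (by positivity)] at h5
    rw [abs_mul, abs_mul]
    rw [abs_of_pos (by norm_num : (0:ℝ) < 2), abs_of_pos hε]
    nlinarith [abs_nonneg α, hε.le]
  have hb₂ : |2 * ε * β| ≤ e₂ := by
    have h5 : ε ≤ e₂ / (2 * (|β| + 1)) := min_le_right _ _
    rw [le_div_iff₀ (by positivity)] at h5
    rw [abs_mul, abs_mul]
    rw [abs_of_pos (by norm_num : (0:ℝ) < 2), abs_of_pos hε]
    nlinarith [abs_nonneg β, hε.le]
  have key : ∀ σ : ℝ, |σ| = 1 → x + (σ * ε) • (α • z₁ + β • z₂) ∈ P := by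
    intro σ hσ
    have h6 : x + (σ * ε) • (α • z₁ + β • z₂) =
        (1/2 : ℝ) • (x + (2 * (σ * ε) * α) • z₁) + (1/2 : ℝ) • (x + (2 * (σ * ε) * β) • z₂) := by
      match_scalars <;> ring
    rw [h6]
    have m₁ := hz₁ (2 * (σ * ε) * α) (by
      rw [show (2 * (σ * ε) * α) = σ * (2 * ε * α) by ring, abs_mul, hσ, one_mul]; exact hb₁)
    have m₂ := hz₂ (2 * (σ * ε) * β) (by
      rw [show (2 * (σ * ε) * β) = σ * (2 * ε * β) by ring, abs_mul, hσ, one_mul]; exact hb₂)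
    exact hPconv m₁ m₂ (by norm_num) (by norm_num) (by norm_num)
  have k₁ := key 1 (by norm_num)
  have k₂ := key (-1) (by norm_num)
  rw [one_mul] at k₁
  refine ⟨ε, hε, k₁, ?_⟩
  have h7 : x - ε • (α • z₁ + β • z₂) = x + (-1 * ε) • (α • z₁ + β • z₂) := by module
  rw [h7]; exact k₂

/-- The minimal face of `P` containing `x`, when `x ∈ openSegment v w` with `v, w` extreme
points and `x` an extreme point of the half-space slice, is the segment `[v, w]`;
in particular that segment is a face of `P`. -/
lemma aux_edge {P : Set V} (hPconv : Convex ℝ P) {u : V} {c : ℝ} {x v w : V} {θ : ℝ}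
    (hv : v ∈ Set.extremePoints ℝ P) (hw : w ∈ Set.extremePoints ℝ P)
    (hvw : ⟪u, v⟫ ≠ ⟪u, w⟫) (hθ0 : 0 < θ) (hθ1 : θ < 1) (hxvw : x = θ • v + (1 - θ) • w)
    (hext : x ∈ Set.extremePoints ℝ (P ∩ {z | c ≤ ⟪u, z⟫})) (hxc : ⟪u, x⟫ = c) :
    IsExtreme ℝ P (segment ℝ v w) := by
  have hvP : v ∈ P := extremePoints_subset hv
  have hwP : w ∈ P := extremePoints_subset hw
  have hvne : v ≠ w := fun h => hvw (by rw [h])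
  have hxP : x ∈ P := by
    rw [hxvw]; exact hPconv hvP hwP hθ0.le (by linarith) (by ring)
  set F : Set V := {p | p ∈ P ∧ ∃ ε : ℝ, 0 < ε ∧ x - ε • (p - x) ∈ P} with hFdef
  -- (a) F is an extreme subset of P
  have hFx : IsExtreme ℝ P F := by
    constructor
    · exact fun p hp => hp.1
    · intro p hp q hq z hz hzseg
      obtain ⟨hzP, ε, hε, hzfeas⟩ := hz
      obtain ⟨a, b, ha, hb, hab, hzeq⟩ := hzseg
      have hb' : b = 1 - a := by linarith
      subst hb'
      have ha1 : a < 1 := by linarith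
      refine (show p ∈ F ∧ q ∈ F from ⟨?_, ?_⟩).1
      · have hD : (0:ℝ) < 1 + ε * (1 - a) := by nlinarith
        have hDne : (1 + ε * (1 - a)) ≠ 0 := hD.ne'
        refine ⟨hp, ε * a / (1 + ε * (1 - a)), div_pos (mul_pos hε ha) hD, ?_⟩
        have hcomb : x - (ε * a / (1 + ε * (1 - a))) • (p - x) =
            (1 / (1 + ε * (1 - a))) • (x - ε • (z - x)) +
            (ε * (1 - a) / (1 + ε * (1 - a))) • q := by
          rw [← hzeq]; match_scalars <;> field_simp [hDne] <;> ring
        rw [hcomb]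
        refine hPconv hzfeas hq (by positivity) ?_ (by field_simp)
        exact div_nonneg (by nlinarith) hD.le
      · have hD : (0:ℝ) < 1 + ε * a := by nlinarith
        have hDne : (1 + ε * a) ≠ 0 := hD.ne'
        refine ⟨hq, ε * (1 - a) / (1 + ε * a), div_pos (mul_pos hε (by linarith)) hD, ?_⟩
        have hcomb : x - (ε * (1 - a) / (1 + ε * a)) • (q - x) =
            (1 / (1 + ε * a)) • (x - ε • (z - x)) +
            (ε * a / (1 + ε * a)) • p := by
          rw [← hzeq]; match_scalars <;> field_simp [hDne] <;> ring
        rw [hcomb]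
        refine hPconv hzfeas hp (by positivity) ?_ (by field_simp)
        exact div_nonneg (by nlinarith) hD.le
  -- (b) v and w belong to F
  have hθ1' : (0:ℝ) < 1 - θ := by linarith
  have hθne : θ ≠ 0 := hθ0.ne'
  have hθ1ne : (1:ℝ) - θ ≠ 0 := hθ1'.ne'
  have hvF : v ∈ F := by
    refine ⟨hvP, θ / (1 - θ), div_pos hθ0 hθ1', ?_⟩
    have h1 : x - (θ / (1 - θ)) • (v - x) = w := by
      rw [hxvw]; match_scalars <;> field_simp [hθ1ne] <;> ring
    rw [h1]; exact hwP
  have hwF : w ∈ F := by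
    refine ⟨hwP, (1 - θ) / θ, div_pos hθ1' hθ0, ?_⟩
    have h1 : x - ((1 - θ) / θ) • (w - x) = v := by
      rw [hxvw]; match_scalars <;> field_simp [hθne] <;> ring
    rw [h1]; exact hvP
  -- (c1) every element of F lies on the line through v and w
  have hline : ∀ p ∈ F, ∃ s : ℝ, p - x = s • (v - w) := by
    rintro p ⟨hpP, ε₀, hε₀, hfeas⟩
    by_contra hcon
    push_neg at hcon
    set z₁ : V := p - x with hz₁def
    set z₂ : V := v - w with hz₂def
    have hz₂c : ⟪u, z₂⟫ ≠ 0 := by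
      rw [hz₂def, inner_sub_right]; exact sub_ne_zero.2 hvw
    set y : V := ⟪u, z₂⟫ • z₁ - ⟪u, z₁⟫ • z₂ with hydef
    have hy0 : ⟪u, y⟫ = 0 := by
      rw [hydef, inner_sub_right, real_inner_smul_right, real_inner_smul_right]; ring
    have hyne : y ≠ 0 := by
      intro h
      have h2 : ⟪u, z₂⟫ • z₁ = ⟪u, z₁⟫ • z₂ := by
        rw [hydef] at h; rwa [sub_eq_zero] at h
      have h3 : z₁ = (⟪u, z₂⟫⁻¹ * ⟪u, z₁⟫) • z₂ := by
        rw [mul_smul, ← h2, inv_smul_smul₀ hz₂c]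
      exact hcon _ h3
    -- feasible intervals in the two directions
    have hint₁ : ∀ t : ℝ, |t| ≤ min 1 ε₀ → x + t • z₁ ∈ P := by
      have e1 : x + (1:ℝ) • z₁ ∈ P := by
        rw [hz₁def]; simpa using hpP
      have e2 : x - ε₀ • z₁ ∈ P := hfeas
      exact aux_interval hPconv one_pos hε₀ e1 e2
    have hint₂ : ∀ t : ℝ, |t| ≤ min (1 - θ) θ → x + t • z₂ ∈ P := by
      have e1 : x + (1 - θ) • z₂ ∈ P := by
        have : x + (1 - θ) • z₂ = v := by rw [hz₂def, hxvw]; module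
        rw [this]; exact hvP
      have e2 : x - θ • z₂ ∈ P := by
        have : x - θ • z₂ = w := by rw [hz₂def, hxvw]; module
        rw [this]; exact hwP
      exact aux_interval hPconv (by linarith) hθ0 e1 e2
    obtain ⟨ε, hε, hplus, hminus⟩ := aux_two_dir hPconv (lt_min one_pos hε₀)
      (lt_min (by linarith) hθ0) hint₁ hint₂ ⟪u, z₂⟫ (-⟪u, z₁⟫)
    have hyy : y = ⟪u, z₂⟫ • z₁ + (-⟪u, z₁⟫) • z₂ := by rw [hydef]; module
    rw [← hyy] at hplus hminus
    exact hyne (aux_perturb hext hxc hy0 hε hplus hminus)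
  -- (c2) F is contained in the segment [v, w]
  have hFseg : F ⊆ segment ℝ v w := by
    intro p hp
    obtain ⟨s, hs⟩ := hline p hp
    have hpP : p ∈ P := hp.1
    have hp' : p = x + s • (v - w) := by rw [← hs]; abel
    by_cases hsle : s ≤ 1 - θ
    · by_cases hsge : -θ ≤ s
      · refine ⟨θ + s, 1 - θ - s, by linarith, by linarith, by ring, ?_⟩
        rw [hp', hxvw]; module
      · exfalso
        push_neg at hsge
        have hden : (0:ℝ) < 1 - θ - s := by linarith
        have hdenne : (1:ℝ) - θ - s ≠ 0 := hden.ne'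
        set η : ℝ := (-θ - s) / (1 - θ - s) with hη
        have hη0 : 0 < η := div_pos (by linarith) hden
        have hη1 : η < 1 := by rw [hη, div_lt_one hden]; linarith
        have hid : η • v + (1 - η) • p = w := by
          rw [hp', hxvw, hη]; match_scalars <;> field_simp [hdenne] <;> ring
        obtain ⟨h1, -⟩ := (mem_extremePoints.mp hw).2 v hvP p hpP
          ⟨η, 1 - η, hη0, by linarith, by ring, hid⟩
        exact hvne h1
    · exfalso
      push_neg at hsle
      have hden : (0:ℝ) < s + θ := by linarith
      have hdenne : s + θ ≠ 0 := hden.ne'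
      set η : ℝ := (s - (1 - θ)) / (s + θ) with hη
      have hη0 : 0 < η := div_pos (by linarith) hden
      have hη1 : η < 1 := by
        rw [hη, div_lt_one hden]; linarith
      have hid : η • w + (1 - η) • p = v := by
        rw [hp', hxvw, hη]; match_scalars <;> field_simp [hdenne] <;> ring
      obtain ⟨h1, -⟩ := (mem_extremePoints.mp hv).2 w hwP p hpP
        ⟨η, 1 - η, hη0, by linarith, by ring, hid⟩
      exact hvne h1.symm
  -- (d) the segment [v, w] is contained in F
  have hsegF : segment ℝ v w ⊆ F := by
    rintro p ⟨a, b, ha, hb, hab, hpeq⟩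
    have hb' : b = 1 - a := by linarith
    subst hb'
    have ha1 : a ≤ 1 := by linarith
    have hpP : p ∈ P := by rw [← hpeq]; exact hPconv hvP hwP ha hb hab
    set ε : ℝ := min θ (1 - θ) with hε
    have hε0 : 0 < ε := lt_min hθ0 (by linarith)
    have hεθ : ε ≤ θ := min_le_left _ _
    have hεθ' : ε ≤ 1 - θ := min_le_right _ _
    refine ⟨hpP, ε, hε0, ?_⟩
    have hid : x - ε • (p - x) = (θ - ε * (a - θ)) • v + (1 - (θ - ε * (a - θ))) • w := by
      rw [hxvw, ← hpeq]; match_scalars <;> ring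
    rw [hid]
    have hκ0 : 0 ≤ θ - ε * (a - θ) := by nlinarith
    have hκ1 : θ - ε * (a - θ) ≤ 1 := by nlinarith
    exact hPconv hvP hwP hκ0 (by linarith) (by ring)
  have hFeq : F = segment ℝ v w := subset_antisymm hFseg hsegF
  rw [← hFeq]
  exact hFx

lemma aux_hyper_point [FiniteDimensional ℝ V] {P : Set V} {S : Set V}
    (hPS : P = convexHull ℝ S)
    {u : V} {c : ℝ} {x : V}
    (hgen : ∀ v ∈ S, ⟪u, v⟫ ≠ c)
    (hext : x ∈ Set.extremePoints ℝ (P ∩ {z | c ≤ ⟪u, z⟫})) (hxc : ⟪u, x⟫ = c) :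
    ∃ v ∈ S, ∃ w ∈ S, ∃ θ : ℝ, 0 < θ ∧ θ < 1 ∧ x = θ • v + (1 - θ) • w ∧
      c < ⟪u, v⟫ ∧ ⟪u, w⟫ < c := by
  classical
  have hPconv : Convex ℝ P := hPS ▸ convex_convexHull ℝ S
  have hxP : x ∈ P := (extremePoints_subset hext).1
  have hx : x ∈ convexHull ℝ S := hPS ▸ hxP
  set t := Caratheodory.minCardFinsetOfMemConvexHull hx with htdef
  have htS : ↑t ⊆ S := Caratheodory.minCardFinsetOfMemConvexHull_subseteq hx
  have hxt : x ∈ convexHull ℝ (↑t : Set V) := Caratheodory.mem_minCardFinsetOfMemConvexHull hx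
  have htne : t.Nonempty := Caratheodory.minCardFinsetOfMemConvexHull_nonempty hx
  have hAI : AffineIndependent ℝ ((↑) : t → V) := Caratheodory.affineIndependent_minCardFinsetOfMemConvexHull hx
  rw [Finset.convexHull_eq] at hxt
  obtain ⟨wt, hwt0, hwt1, hwtx⟩ := hxt
  -- all weights are strictly positive, by minimality of `t`
  have hwpos : ∀ i ∈ t, 0 < wt i := by
    intro i hi
    rcases (hwt0 i hi).lt_or_eq with h | h
    · exact h
    · exfalso
      have h1 : (t.erase i).centerMass wt id = t.centerMass wt id :=
        Finset.centerMass_subset id (Finset.erase_subset i t) (by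
          intro j hj hj'
          have : j = i := by
            by_contra hne
            exact hj' (Finset.mem_erase.2 ⟨hne, hj⟩)
          rw [this, ← h])
      have hsum : ∑ j ∈ t.erase i, wt j = 1 := by
        rw [Finset.sum_erase _ h.symm]; exact hwt1
      have hmem : x ∈ convexHull ℝ (↑(t.erase i) : Set V) := by
        rw [← hwtx, ← h1]
        exact Finset.centerMass_mem_convexHull _
          (fun j hj => hwt0 j (Finset.erase_subset _ _ hj))
          (by rw [hsum]; norm_num) (fun j hj => Finset.mem_coe.2 hj)
      have hcard := Caratheodory.minCardFinsetOfMemConvexHull_card_le_card hx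
        (subset_trans (Finset.coe_subset.2 (Finset.erase_subset i t)) htS) hmem
      have h2c := Finset.card_erase_lt_of_mem hi
      have htc : t.card = (Caratheodory.minCardFinsetOfMemConvexHull hx).card := rfl
      omega
  -- the support has at most two elements
  have hcard2 : t.card ≤ 2 := by
    by_contra hc3
    push_neg at hc3
    have hfr : Module.finrank ℝ (vectorSpan ℝ (↑t : Set V)) = t.card - 1 := by
      have h0 : Fintype.card t = (t.card - 1) + 1 := by
        rw [Fintype.card_coe]; omega
      have h1 := hAI.finrank_vectorSpan h0
      have h2 : vectorSpan ℝ (Set.range (Subtype.val : {z // z ∈ t} → V)) =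
          vectorSpan ℝ (↑t : Set V) := by
        congr 1
        exact Subtype.range_coe
      rw [h2] at h1
      exact h1
    have h2 : ∃ y : V, y ∈ vectorSpan ℝ (↑t : Set V) ∧ y ≠ 0 ∧ ⟪u, y⟫ = 0 := by
      by_contra hno
      push_neg at hno
      set f : (vectorSpan ℝ (↑t : Set V)) →ₗ[ℝ] ℝ :=
        (innerSL ℝ u).toLinearMap.comp (vectorSpan ℝ (↑t : Set V)).subtype with hfdef
      have hinj : Function.Injective f := by
        rw [← LinearMap.ker_eq_bot, Submodule.eq_bot_iff]
        rintro ⟨z, hz⟩ hzker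
        have hz0 : ⟪u, z⟫ = 0 := hzker
        by_contra hzz
        have hzne : z ≠ 0 := by
          intro h; apply hzz; simp [h]
        exact hno z hz hzne hz0
      have h3 := LinearMap.finrank_le_finrank_of_injective hinj
      rw [Module.finrank_self] at h3
      omega
    obtain ⟨y, hyW, hyne, hyu⟩ := h2
    have htne' := htne
    obtain ⟨i₀, hi₀⟩ := htne'
    have hspan : vectorSpan ℝ (↑t : Set V) =
        Submodule.span ℝ (↑(t.image (fun v => v - i₀)) : Set V) := by
      rw [vectorSpan_eq_span_vsub_set_right ℝ (Finset.mem_coe.2 hi₀), Finset.coe_image]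
      congr 1
    rw [hspan] at hyW
    obtain ⟨g, -, hg⟩ := Submodule.mem_span_finset.1 hyW
    rw [Finset.sum_image (by
      intro a _ b _ h
      have := congrArg (· + i₀) h
      simpa using this)] at hg
    set μ : V → ℝ := fun i => g (i - i₀) - (if i = i₀ then ∑ j ∈ t, g (j - i₀) else 0) with hμdef
    have hμsum : ∑ i ∈ t, μ i = 0 := by
      simp only [hμdef, Finset.sum_sub_distrib, Finset.sum_ite_eq' t i₀, hi₀, if_true]
      ring
    have hμvec : ∑ i ∈ t, μ i • i = y := by
      have h8 : ∑ i ∈ t, g (i - i₀) • (i - i₀) =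
          (∑ i ∈ t, g (i - i₀) • i) - (∑ i ∈ t, g (i - i₀)) • i₀ := by
        rw [Finset.sum_smul, ← Finset.sum_sub_distrib]
        exact Finset.sum_congr rfl fun i _ => smul_sub _ _ _
      have h9 : ∑ i ∈ t, μ i • i =
          (∑ i ∈ t, g (i - i₀) • i) - (∑ i ∈ t, g (i - i₀)) • i₀ := by
        simp only [hμdef, sub_smul, Finset.sum_sub_distrib, ite_smul, zero_smul,
          Finset.sum_ite_eq' t i₀, hi₀, if_true]
        try rw [Finset.sum_smul]
      rw [h9, ← hg, h8]
    -- choose a positive ε small enough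
    set ε : ℝ := t.inf' htne (fun i => wt i / (|μ i| + 1)) with hεdef
    have hε : 0 < ε := by
      rw [hεdef, Finset.lt_inf'_iff]
      intro i hi
      exact div_pos (hwpos i hi) (by positivity)
    have hbound : ∀ i ∈ t, ε * |μ i| ≤ wt i := by
      intro i hi
      have h10 : ε ≤ wt i / (|μ i| + 1) := Finset.inf'_le _ hi
      rw [le_div_iff₀ (by positivity)] at h10
      nlinarith [abs_nonneg (μ i), hε]
    -- the two perturbed points lie in P
    have hmemP : ∀ σ : ℝ, |σ| = 1 → x + (σ * ε) • y ∈ P := by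
      intro σ hσ
      have habs : ∀ i ∈ t, 0 ≤ wt i + (σ * ε) * μ i := by
        intro i hi
        have h11 := hbound i hi
        have h12 : |(σ * ε) * μ i| = ε * |μ i| := by
          rw [abs_mul, abs_mul, hσ, abs_of_pos hε]; ring
        have h13 := neg_abs_le ((σ * ε) * μ i)
        nlinarith
      have hsum : ∑ i ∈ t, (wt i + (σ * ε) * μ i) = 1 := by
        rw [Finset.sum_add_distrib, hwt1, ← Finset.mul_sum, hμsum]; ring
      have h14 : t.centerMass (fun i => wt i + (σ * ε) * μ i) id = x + (σ * ε) • y := by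
        rw [Finset.centerMass_eq_of_sum_1 _ _ hsum]
        have h15 : t.centerMass wt id = x := hwtx
        rw [Finset.centerMass_eq_of_sum_1 _ _ hwt1] at h15
        simp only [id] at h15 ⊢
        rw [← h15, ← hμvec]
        rw [Finset.smul_sum, ← Finset.sum_add_distrib]
        refine Finset.sum_congr rfl fun i _ => ?_
        rw [add_smul, smul_smul]
      have : x + (σ * ε) • y ∈ convexHull ℝ (↑t : Set V) := by
        rw [← h14]
        exact Finset.centerMass_mem_convexHull _ habs (by rw [hsum]; norm_num)
          (fun i hi => Finset.mem_coe.2 hi)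
      rw [hPS]
      exact convexHull_mono htS this
    have hplus := hmemP 1 (by norm_num)
    have hminus := hmemP (-1) (by norm_num)
    rw [one_mul] at hplus
    have h16 : x - ε • y = x + (-1 * ε) • y := by module
    rw [← h16] at hminus
    exact hyne (aux_perturb hext hxc hyu hε hplus hminus)
  -- now `t` has one or two elements
  rcases Nat.lt_or_ge t.card 2 with hlt | hge
  · exfalso
    have hcard1 : t.card = 1 := by have := htne.card_pos; omega
    obtain ⟨v, hv⟩ := Finset.card_eq_one.1 hcard1
    have hxv : x = v := by
      have h17 : x ∈ convexHull ℝ (↑t : Set V) := Caratheodory.mem_minCardFinsetOfMemConvexHull hx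
      rw [hv] at h17
      simpa [convexHull_singleton] using h17
    exact hgen v (htS (by rw [hv]; exact Finset.mem_singleton_self v)) (hxv ▸ hxc)
  · have hcard : t.card = 2 := le_antisymm hcard2 hge
    obtain ⟨v, w, hvw, hv⟩ := Finset.card_eq_two.1 hcard
    have hvS : v ∈ S := htS (by rw [hv]; simp)
    have hwS : w ∈ S := htS (by rw [hv]; simp)
    have h17 : x ∈ segment ℝ v w := by
      have h18 : x ∈ convexHull ℝ (↑t : Set V) := Caratheodory.mem_minCardFinsetOfMemConvexHull hx
      rw [hv] at h18
      simpa [convexHull_pair] using h18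
    obtain ⟨a, b, ha, hb, hab, hx'⟩ := h17
    have hb' : b = 1 - a := by linarith
    subst hb'
    have ha0 : 0 < a := by
      rcases ha.lt_or_eq with h | h
      · exact h
      · exfalso
        have : x = w := by rw [← hx', ← h]; module
        exact hgen w hwS (this ▸ hxc)
    have ha1 : a < 1 := by
      rcases hb.lt_or_eq with h | h
      · linarith
      · exfalso
        have : x = v := by rw [← hx']; rw [show a = 1 by linarith]; module
        exact hgen v hvS (this ▸ hxc)
    have hinner : a * ⟪u, v⟫ + (1 - a) * ⟪u, w⟫ = c := by
      rw [← hxc, ← hx', inner_combo]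
    rcases lt_or_gt_of_ne (hgen v hvS) with hvc | hvc
    · rcases lt_or_gt_of_ne (hgen w hwS) with hwc | hwc
      · exfalso; nlinarith
      · exact ⟨w, hwS, v, hvS, 1 - a, by linarith, by linarith,
          by rw [← hx']; module, hwc, hvc⟩
    · rcases lt_or_gt_of_ne (hgen w hwS) with hwc | hwc
      · exact ⟨v, hvS, w, hwS, a, ha0, ha1, by rw [← hx'], hvc, hwc⟩
      · exfalso; nlinarith

lemma aux_edgept_extreme {P : Set V} {u : V} {c : ℝ} {v w p : V}
    (hface : IsExtreme ℝ P (segment ℝ v w)) (hp : p ∈ segment ℝ v w) (hpc : ⟪u, p⟫ = c)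
    (hvc : c < ⟪u, v⟫) (hwc : ⟪u, w⟫ < c) :
    p ∈ Set.extremePoints ℝ (P ∩ {z | c ≤ ⟪u, z⟫}) := by
  have hne : ⟪u, v⟫ ≠ ⟪u, w⟫ := by intro h; linarith
  refine mem_extremePoints.2 ⟨⟨hface.1 hp, le_of_eq hpc.symm⟩, ?_⟩
  intro x₁ hx₁ x₂ hx₂ hseg
  obtain ⟨hx₁P, hx₁c⟩ := hx₁
  obtain ⟨hx₂P, hx₂c⟩ := hx₂
  obtain ⟨hs₁, hs₂⟩ : x₁ ∈ segment ℝ v w ∧ x₂ ∈ segment ℝ v w :=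
    ⟨hface.2 hx₁P hx₂P hp hseg, hface.right_mem_of_mem_openSegment hx₁P hx₂P hp hseg⟩
  obtain ⟨a, b, ha, hb, hab, heq⟩ := hseg
  have hpi : a * ⟪u, x₁⟫ + b * ⟪u, x₂⟫ = c := by rw [← hpc, ← heq, inner_combo]
  have h3 : a * c + b * c = c := by linear_combination c * hab
  have hc₁ : ⟪u, x₁⟫ = c := by
    by_contra h
    have h1 : c < ⟪u, x₁⟫ := lt_of_le_of_ne hx₁c (Ne.symm h)
    have h2 : c ≤ ⟪u, x₂⟫ := hx₂c
    nlinarith [mul_lt_mul_of_pos_left h1 ha, mul_le_mul_of_nonneg_left h2 hb.le]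
  have hc₂ : ⟪u, x₂⟫ = c := by
    by_contra h
    have h1 : c < ⟪u, x₂⟫ := lt_of_le_of_ne hx₂c (Ne.symm h)
    have h2 : c ≤ ⟪u, x₁⟫ := hx₁c
    nlinarith [mul_lt_mul_of_pos_left h1 hb, mul_le_mul_of_nonneg_left h2 ha.le]
  exact ⟨seg_unique hs₁ hp hc₁ hpc hne, seg_unique hs₂ hp hc₂ hpc hne⟩

end Aux

/-- A polytope: the convex hull of a finite point set. -/
def IsPolytope {d : ℕ} (P : Set (EuclideanSpace ℝ (Fin d))) : Prop :=
  ∃ S : Finset (EuclideanSpace ℝ (Fin d)), P = convexHull ℝ (S : Set (EuclideanSpace ℝ (Fin d)))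

/-- A face of a polytope: an extreme subset. -/
def IsFaceOf {d : ℕ} (F P : Set (EuclideanSpace ℝ (Fin d))) : Prop :=
  IsExtreme ℝ P F

/-- The dimension of a face: the rank of its vector span. -/
noncomputable def faceDim {d : ℕ} (F : Set (EuclideanSpace ℝ (Fin d))) : ℕ :=
  Module.finrank ℝ (vectorSpan ℝ F)

/-- The vertex set of a polytope: its extreme points. -/
def verts {d : ℕ} (P : Set (EuclideanSpace ℝ (Fin d))) : Set (EuclideanSpace ℝ (Fin d)) :=
  Set.extremePoints ℝ P

/-- Let `P ⊂ ℝ^d` be a `d`-dimensional polytope, `A ⊔ B` a partition of its vertex set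
into two nonempty sets, and `H = {x : ⟪u,x⟫ = c}` an affine hyperplane containing no
vertex of `P` with `A ⊂ H⁺` and `B ⊂ H⁻`.  Then `P ∩ H^{≥0}` is a `d`-dimensional
polytope whose vertex set consists of `A` together with the intersection points
`conv{v,w} ∩ H` for the edges `conv{v,w}` of `P` with `v ∈ A`, `w ∈ B`. -/
theorem stmt_9 (d : ℕ) (P : Set (EuclideanSpace ℝ (Fin d)))
    (hP : IsPolytope P) (hPdim : faceDim P = d)
    (A B : Set (EuclideanSpace ℝ (Fin d)))
    (hA : A.Nonempty) (hB : B.Nonempty) (hdisj : Disjoint A B)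
    (hpart : A ∪ B = verts P)
    (u : EuclideanSpace ℝ (Fin d)) (c : ℝ) (hu : u ≠ 0)
    (hgen : ∀ v ∈ verts P, ⟪u, v⟫ ≠ c)
    (hAp : ∀ v ∈ A, c < ⟪u, v⟫) (hBm : ∀ w ∈ B, ⟪u, w⟫ < c) :
    IsPolytope (P ∩ {x | c ≤ ⟪u, x⟫}) ∧
    faceDim (P ∩ {x | c ≤ ⟪u, x⟫}) = d ∧
    verts (P ∩ {x | c ≤ ⟪u, x⟫}) =
      A ∪ {p | ∃ v ∈ A, ∃ w ∈ B, IsFaceOf (segment ℝ v w) P ∧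
        p ∈ segment ℝ v w ∧ ⟪u, p⟫ = c} := by
  classical
  obtain ⟨S, hPS⟩ := hP
  set Q : Set (EuclideanSpace ℝ (Fin d)) := P ∩ {x | c ≤ ⟪u, x⟫} with hQdef
  set Epts : Set (EuclideanSpace ℝ (Fin d)) :=
    {p | ∃ v ∈ A, ∃ w ∈ B, IsFaceOf (segment ℝ v w) P ∧
      p ∈ segment ℝ v w ∧ ⟪u, p⟫ = c} with hEdef
  have hPconv : Convex ℝ P := hPS ▸ convex_convexHull ℝ _
  have hPcomp : IsCompact P := hPS ▸ S.finite_toSet.isCompact_convexHull ℝ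
  have hVS : verts P ⊆ ↑S := hPS ▸ extremePoints_convexHull_subset
  have hVfin : (verts P).Finite := S.finite_toSet.subset hVS
  have hPV : P = convexHull ℝ (verts P) := by
    have h1 := closure_convexHull_extremePoints hPcomp hPconv
    nth_rewrite 1 [← h1]
    exact (hVfin.isClosed_convexHull ℝ).closure_eq
  have hucont : Continuous fun z : EuclideanSpace ℝ (Fin d) => (⟪u, z⟫ : ℝ) :=
    Continuous.inner continuous_const continuous_id
  have hClosedHalf : IsClosed {x : EuclideanSpace ℝ (Fin d) | c ≤ ⟪u, x⟫} :=
    isClosed_le continuous_const hucont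
  have hulin : IsLinearMap ℝ fun z : EuclideanSpace ℝ (Fin d) => (⟪u, z⟫ : ℝ) := by
    refine ⟨fun x y => inner_add_right _ _ _, fun r x => ?_⟩
    rw [smul_eq_mul]
    exact real_inner_smul_right _ _ _
  have hQconv : Convex ℝ Q := hPconv.inter (convex_halfSpace_ge hulin c)
  have hQcomp : IsCompact Q := hPcomp.inter_right hClosedHalf
  have hAV : A ⊆ verts P := by rw [← hpart]; exact Set.subset_union_left
  have hBV : B ⊆ verts P := by rw [← hpart]; exact Set.subset_union_right
  have hAP : A ⊆ P := fun a ha => extremePoints_subset (hAV ha)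
  -- the two inclusions between extreme points of Q and A ∪ Epts
  have hsub1 : A ∪ Epts ⊆ Set.extremePoints ℝ Q := by
    rintro p (hpA | hpE)
    · exact extreme_mono Set.inter_subset_left (hAV hpA) ⟨hAP hpA, le_of_lt (hAp p hpA)⟩
    · obtain ⟨v, hvA, w, hwB, hface, hpseg, hpc⟩ := hpE
      exact aux_edgept_extreme hface hpseg hpc (hAp v hvA) (hBm w hwB)
  have hsub2 : Set.extremePoints ℝ Q ⊆ A ∪ Epts := by
    intro x hx
    have hxQ : x ∈ Q := extremePoints_subset hx
    rcases eq_or_lt_of_le (show c ≤ ⟪u, x⟫ from hxQ.2) with hc | hc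
    · right
      obtain ⟨v, hvV, w, hwV, θ, hθ0, hθ1, hxvw, hvc, hwc⟩ :=
        aux_hyper_point hPV hgen hx hc.symm
      have hvA : v ∈ A := by
        rcases (show v ∈ A ∪ B by rw [hpart]; exact hvV) with h | h
        · exact h
        · exact absurd (hBm v h) (by linarith)
      have hwB : w ∈ B := by
        rcases (show w ∈ A ∪ B by rw [hpart]; exact hwV) with h | h
        · exact absurd (hAp w h) (by linarith)
        · exact h
      have hface : IsExtreme ℝ P (segment ℝ v w) :=
        aux_edge hPconv hvV hwV (by intro h; rw [h] at hvc; linarith) hθ0 hθ1 hxvw hx hc.symm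
      exact ⟨v, hvA, w, hwB, hface,
        ⟨θ, 1 - θ, hθ0.le, by linarith, by ring, hxvw.symm⟩, hc.symm⟩
    · left
      have hxV : x ∈ verts P := aux_extreme_gt hPconv hx hc
      rcases (show x ∈ A ∪ B by rw [hpart]; exact hxV) with h | h
      · exact h
      · exact absurd (hBm x h) (by linarith)
  have hext_eq : Set.extremePoints ℝ Q = A ∪ Epts := subset_antisymm hsub2 hsub1
  -- finiteness
  have hAfin : A.Finite := hVfin.subset hAV
  have hBfin : B.Finite := hVfin.subset hBV
  have hEfin : Epts.Finite := by
    have hsub : Epts ⊆ Set.image2 (fun v w : EuclideanSpace ℝ (Fin d) =>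
        ((c - ⟪u, w⟫) / (⟪u, v⟫ - ⟪u, w⟫)) • v + ((⟪u, v⟫ - c) / (⟪u, v⟫ - ⟪u, w⟫)) • w) A B := by
      rintro p ⟨v, hvA, w, hwB, hface, hpseg, hpc⟩
      refine ⟨v, hvA, w, hwB, ?_⟩
      have hvc := hAp v hvA
      have hwc := hBm w hwB
      have hΔ : (0:ℝ) < ⟪u, v⟫ - ⟪u, w⟫ := by linarith
      have hΔne : (⟪u, v⟫ - ⟪u, w⟫ : ℝ) ≠ 0 := hΔ.ne'
      have hq_seg : ((c - ⟪u, w⟫) / (⟪u, v⟫ - ⟪u, w⟫)) • v +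
          ((⟪u, v⟫ - c) / (⟪u, v⟫ - ⟪u, w⟫)) • w ∈ segment ℝ v w := by
        refine ⟨_, _, div_nonneg (by linarith) hΔ.le, div_nonneg (by linarith) hΔ.le,
          by rw [← add_div, div_eq_one_iff_eq hΔne]; ring, rfl⟩
      have hq_c : ⟪u, ((c - ⟪u, w⟫) / (⟪u, v⟫ - ⟪u, w⟫)) • v +
          ((⟪u, v⟫ - c) / (⟪u, v⟫ - ⟪u, w⟫)) • w⟫ = c := by
        rw [inner_combo]
        have hgen' : ∀ iv iw : ℝ, iv - iw ≠ 0 →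
            ((c - iw) / (iv - iw)) * iv + ((iv - c) / (iv - iw)) * iw = c := by
          intro iv iw hne
          field_simp
          ring
        exact hgen' _ _ hΔne
      exact (seg_unique hpseg hq_seg hpc hq_c (by linarith)).symm
    exact (hAfin.image2 _ hBfin).subset hsub
  have hQEfin : (A ∪ Epts).Finite := hAfin.union hEfin
  have hQhull : Q = convexHull ℝ (A ∪ Epts) := by
    have h1 := closure_convexHull_extremePoints hQcomp hQconv
    rw [hext_eq] at h1
    rw [← h1, IsClosed.closure_eq (hQEfin.isClosed_convexHull ℝ)]
  refine ⟨⟨hQEfin.toFinset, by rw [hQEfin.coe_toFinset]; exact hQhull⟩, ?_, hext_eq⟩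
  -- dimension
  have hfrk : Module.finrank ℝ (EuclideanSpace ℝ (Fin d)) = d := finrank_euclideanSpace_fin
  have hvs_top : vectorSpan ℝ P = ⊤ :=
    Submodule.eq_top_of_finrank_eq (hPdim.trans hfrk.symm)
  obtain ⟨a, haA⟩ := hA
  have haP : a ∈ P := hAP haA
  have hPne : P.Nonempty := ⟨a, haP⟩
  have haff : affineSpan ℝ P = ⊤ :=
    (AffineSubspace.affineSpan_eq_top_iff_vectorSpan_eq_top_of_nonempty ℝ _ _ hPne).2 hvs_top
  obtain ⟨x₀, hx₀⟩ := hPconv.interior_nonempty_iff_affineSpan_eq_top.2 haff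
  set D : ℝ := ⟪u, x₀⟫ - ⟪u, a⟫ with hD
  set t : ℝ := min (1/2) ((⟪u, a⟫ - c) / (2 * (|D| + 1))) with ht
  have hac : c < ⟪u, a⟫ := hAp a haA
  have ht0 : 0 < t := lt_min (by norm_num) (div_pos (by linarith) (by positivity))
  have ht1 : t < 1 := lt_of_le_of_lt (min_le_left _ _) (by norm_num)
  have htD : t * (|D| + 1) ≤ (⟪u, a⟫ - c) / 2 := by
    have h5 : t ≤ (⟪u, a⟫ - c) / (2 * (|D| + 1)) := min_le_right _ _
    rw [le_div_iff₀ (by positivity)] at h5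
    linarith
  set y : EuclideanSpace ℝ (Fin d) := (1 - t) • a + t • x₀ with hy
  have hyint : y ∈ interior P :=
    hPconv.combo_self_interior_mem_interior haP hx₀ (by linarith) ht0 (by ring)
  have hyc : c < ⟪u, y⟫ := by
    have h6 : ⟪u, y⟫ = ⟪u, a⟫ + t * D := by rw [hy, inner_combo, hD]; ring
    have h7 := neg_abs_le D
    nlinarith [abs_nonneg D, ht0]
  have hyQ : y ∈ interior Q := by
    refine interior_maximal ?_ (isOpen_interior.inter (isOpen_lt continuous_const hucont))
      ⟨hyint, hyc⟩
    rintro z ⟨h1, h2⟩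
    exact ⟨interior_subset h1, le_of_lt (show c < ⟪u, z⟫ from h2)⟩
  have hQaff : affineSpan ℝ Q = ⊤ :=
    hQconv.interior_nonempty_iff_affineSpan_eq_top.1 ⟨y, hyQ⟩
  have hQvs : vectorSpan ℝ Q = ⊤ := by
    have hQne : Q.Nonempty := ⟨y, interior_subset hyQ⟩
    exact (AffineSubspace.affineSpan_eq_top_iff_vectorSpan_eq_top_of_nonempty ℝ _ _ hQne).1 hQaff
  show Module.finrank ℝ (vectorSpan ℝ Q) = d
  rw [hQvs, finrank_top, hfrk]
end
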